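/- arXiv:2005.01080 — 3 statements merged into one kernel-verified Lean document; each statement's English description precedes it below -/
import Mathlib

section
/- Let H be an r-graph on the vertex set [n]. For any integers i, j with 1 ≤ i < j ≤ n and any integer s ≥ r, the shifted hypergraph satisfies K_s^r(S_ij(H)) ≥ K_s^r(H). -/
open Finset

/-- The number of `s`-cliques of the `r`-uniform hypergraph `H`
(sets of `s` vertices all of whose `r`-element subsets are edges). -/
def cliqueCount {V : Type*} [Fintype V] [DecidableEq V] (r s : ℕ)
    (H : Finset (Finset V)) : ℕ :=
  ((Finset.univ.powersetCard s).filter (fun S => S.powersetCard r ⊆ H)).card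

/-- The hypergraph `F^{(r)}_{n,k,a}` on `Fin n`: all `r`-element subsets having
at least `a` elements among the first `a*k + a - 1` vertices. -/
def Fnka (n k r a : ℕ) : Finset (Finset (Fin n)) :=
  (Finset.univ.powersetCard r).filter
    (fun E => a ≤ (E.filter (fun x : Fin n => (x : ℕ) < a * k + a - 1)).card)

/-- The matching number of `H` is at most `k`. -/
def matchingLE {V : Type*} (H : Finset (Finset V)) (k : ℕ) : Prop :=
  ∀ M ⊆ H, (M : Set (Finset V)).Pairwise Disjoint → M.card ≤ k

/-- The degree of a vertex set `A`: the number of edges of `H` containing `A`. -/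
def degOf {V : Type*} [DecidableEq V] (H : Finset (Finset V)) (A : Finset V) : ℕ :=
  (H.filter (fun E => A ⊆ E)).card

/-- The shifting operator `S_{ij}` applied to a single edge. -/
def shiftEdge {n : ℕ} (H : Finset (Finset (Fin n))) (i j : Fin n)
    (E : Finset (Fin n)) : Finset (Fin n) :=
  if j ∈ E ∧ i ∉ E ∧ insert i (E.erase j) ∉ H then insert i (E.erase j) else E

/-- The shifted hypergraph `S_{ij}(H)`. -/
def shift {n : ℕ} (H : Finset (Finset (Fin n))) (i j : Fin n) :
    Finset (Finset (Fin n)) :=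
  H.image (shiftEdge H i j)

/-- `H` is stable if it is invariant under all shifts `S_{ij}` with `i < j`. -/
def IsStable {n : ℕ} (H : Finset (Finset (Fin n))) : Prop :=
  ∀ i j : Fin n, i < j → shift H i j = H

/-! Send a clique `A` of `H` to itself if it is still a clique of `S_ij(H)`, and otherwise to
`A - j + i`. A clique destroyed by the shift contains `j` but not `i`, its image `A - j + i` is a
clique of `S_ij(H)`, and `A - j + i` is not a clique of `H`; the last fact keeps the images of
surviving and destroyed cliques apart, so the map is injective. -/

lemma card_insert_erase_of_mem_of_notMem {α : Type*} [DecidableEq α] {s : Finset α} {a b : α}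
    (hb : b ∈ s) (ha : a ∉ s) : (insert a (s.erase b)).card = s.card := by
  rw [card_insert_of_notMem (fun h => ha (mem_of_mem_erase h)), card_erase_add_one hb]

lemma insert_erase_mem_powersetCard {α : Type*} [DecidableEq α] {s t : Finset α} {a b : α}
    {k : ℕ} (ht : t ∈ s.powersetCard k) (hb : b ∈ t) (ha : a ∉ t) :
    insert a (t.erase b) ∈ (insert a (s.erase b)).powersetCard k := by
  rw [mem_powersetCard] at ht ⊢
  exact ⟨insert_subset_insert _ (erase_subset_erase _ ht.1),
    (card_insert_erase_of_mem_of_notMem hb ha).trans ht.2⟩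

lemma eq_of_insert_erase_eq {α : Type*} [DecidableEq α] {s t : Finset α} {a b : α}
    (hbs : b ∈ s) (hbt : b ∈ t) (has : a ∉ s) (hat : a ∉ t)
    (h : insert a (s.erase b) = insert a (t.erase b)) : s = t := by
  refine erase_injOn' b hbs hbt ?_
  simpa [erase_insert, has, hat] using congrArg (·.erase a) h

section Shift

variable {n r : ℕ} {H : Finset (Finset (Fin n))} {i j : Fin n} {A E : Finset (Fin n)}

lemma mem_shift_of_mem (hE : E ∈ H) (h : j ∈ E → i ∉ E → insert i (E.erase j) ∈ H) :
    E ∈ shift H i j := by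
  refine mem_image.2 ⟨E, hE, if_neg ?_⟩
  rintro ⟨hj, hi, hnot⟩
  exact hnot (h hj hi)

lemma mem_shift_of_insert_erase_mem (hij : i ≠ j) (hi : i ∈ E) (hj : j ∉ E)
    (h : insert j (E.erase i) ∈ H) : E ∈ shift H i j := by
  by_cases hE : E ∈ H
  · exact mem_shift_of_mem hE fun hj' => absurd hj' hj
  · have hback : insert i ((insert j (E.erase i)).erase j) = E := by
      rw [erase_insert fun h => hj (mem_of_mem_erase h), insert_erase hi]
    refine mem_image.2 ⟨_, h, ?_⟩
    rw [shiftEdge, if_pos ⟨mem_insert_self _ _, by simp [hij], by rwa [hback]⟩, hback]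

lemma powersetCard_subset_shift (hA : A.powersetCard r ⊆ H)
    (h : j ∈ A → i ∉ A → (insert i (A.erase j)).powersetCard r ⊆ H) :
    A.powersetCard r ⊆ shift H i j := by
  intro R hR
  refine mem_shift_of_mem (hA hR) fun hjR hiR => ?_
  have hjA : j ∈ A := (mem_powersetCard.1 hR).1 hjR
  have hB : (insert i (A.erase j)).powersetCard r ⊆ H := by
    by_cases hiA : i ∈ A
    · exact (powersetCard_mono (insert_subset hiA (erase_subset _ _))).trans hA
    · exact h hjA hiA
  exact hB (insert_erase_mem_powersetCard hR hjR hiR)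

lemma mem_notMem_of_powersetCard_not_subset_shift (hA : A.powersetCard r ⊆ H)
    (hS : ¬ A.powersetCard r ⊆ shift H i j) :
    j ∈ A ∧ i ∉ A ∧ ¬ (insert i (A.erase j)).powersetCard r ⊆ H := by
  by_contra! h
  exact hS (powersetCard_subset_shift hA h)

lemma powersetCard_insert_erase_subset_shift (hij : i ≠ j) (hA : A.powersetCard r ⊆ H)
    (hjA : j ∈ A) : (insert i (A.erase j)).powersetCard r ⊆ shift H i j := by
  intro Q hQ
  obtain ⟨hQB, hQr⟩ := mem_powersetCard.1 hQ
  have hjQ : j ∉ Q := fun h => by simpa [hij.symm] using hQB h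
  have hQA : Q.erase i ⊆ A := fun x hx =>
    mem_of_mem_erase ((mem_insert.1 (hQB (mem_of_mem_erase hx))).resolve_left (ne_of_mem_erase hx))
  by_cases hiQ : i ∈ Q
  · refine mem_shift_of_insert_erase_mem hij hiQ hjQ (hA (mem_powersetCard.2 ⟨?_, ?_⟩))
    · exact insert_subset hjA hQA
    · rw [← hQr, card_insert_erase_of_mem_of_notMem hiQ hjQ]
  · have hQH : Q ∈ H := hA (mem_powersetCard.2 ⟨by rwa [erase_eq_of_notMem hiQ] at hQA, hQr⟩)
    exact mem_shift_of_mem hQH fun hj => absurd hj hjQ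

end Shift

theorem cliqueCount_le_shift_general {n r s : ℕ}
    (H : Finset (Finset (Fin n)))
    (i j : Fin n) (hij : i < j) :
    cliqueCount r s H ≤ cliqueCount r s (shift H i j) := by
  set S := shift H i j
  refine card_le_card_of_injOn
    (fun A => if A.powersetCard r ⊆ S then A else insert i (A.erase j)) ?_ ?_
  · intro A hA
    simp only [coe_filter, mem_powersetCard, Set.mem_ofPred_eq] at hA ⊢
    obtain ⟨⟨-, hAs⟩, hAH⟩ := hA
    split_ifs with hAS
    · exact ⟨⟨subset_univ _, hAs⟩, hAS⟩
    · obtain ⟨hjA, hiA, -⟩ := mem_notMem_of_powersetCard_not_subset_shift hAH hAS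
      exact ⟨⟨subset_univ _, (card_insert_erase_of_mem_of_notMem hjA hiA).trans hAs⟩,
        powersetCard_insert_erase_subset_shift hij.ne hAH hjA⟩
  · intro A hA B hB hAB
    simp only [coe_filter, mem_powersetCard, Set.mem_ofPred_eq] at hA hB hAB
    obtain ⟨-, hAH⟩ := hA
    obtain ⟨-, hBH⟩ := hB
    split_ifs at hAB with hAS hBS hBS
    · exact hAB
    · exact absurd (hAB ▸ hAH)
        (mem_notMem_of_powersetCard_not_subset_shift hBH hBS).2.2
    · exact absurd (hAB ▸ hBH)
        (mem_notMem_of_powersetCard_not_subset_shift hAH hAS).2.2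
    · obtain ⟨hjA, hiA, -⟩ := mem_notMem_of_powersetCard_not_subset_shift hAH hAS
      obtain ⟨hjB, hiB, -⟩ := mem_notMem_of_powersetCard_not_subset_shift hBH hBS
      exact eq_of_insert_erase_eq hjA hjB hiA hiB hAB

/-- Lemma 3.1, first part: shifting does not decrease the number of cliques. -/
theorem cliqueCount_le_shift {n r s : ℕ}
    (H : Finset (Finset (Fin n))) (hunif : ∀ E ∈ H, E.card = r)
    (i j : Fin n) (hij : i < j) (hrs : r ≤ s) :
    cliqueCount r s H ≤ cliqueCount r s (shift H i j) :=
  cliqueCount_le_shift_general H i j hij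
end

section
/- Let H be an r-graph on n vertices with r ≥ 2 and matching number ν(H) ≤ k, and let u be a vertex of H such that H − u (the subhypergraph induced on V(H)∖{u}) contains a matching of size k. Then the degree of u satisfies deg_H(u) ≤ rk·C(n−2, r−2). -/
/-! Let `W` be the vertex set of a `k`-matching `M` avoiding `u`, so `|W| ≤ rk`. An edge through
`u` missing `W` would extend `M` to a `(k+1)`-matching, so every edge through `u` contains a pair
`{u, v}` with `v ∈ W`, and each such pair lies in at most `C(n-2, r-2)` edges. -/

open Finset

/-- An edge containing `A` is determined by its `r - |A|` vertices outside `A`. -/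
theorem degOf_le_choose {V : Type*} [Fintype V] [DecidableEq V] {r : ℕ}
    (H : Finset (Finset V)) (hunif : ∀ E ∈ H, E.card = r) (A : Finset V) :
    degOf H A ≤ Nat.choose (Fintype.card V - A.card) (r - A.card) := by
  rw [← card_compl, ← card_powersetCard]
  refine card_le_card_of_injOn (· \ A) (fun E hE => ?_) (fun E₁ hE₁ E₂ hE₂ hEq => ?_)
  · obtain ⟨hEH, hAE⟩ := mem_filter.mp hE
    rw [mem_coe, mem_powersetCard, card_sdiff_of_subset hAE, hunif E hEH]
    exact ⟨fun x hx => mem_compl.mpr (mem_sdiff.mp hx).2, rfl⟩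
  · rw [← sdiff_union_of_subset (mem_filter.mp hE₁).2,
      ← sdiff_union_of_subset (mem_filter.mp hE₂).2]
    exact congrArg (· ∪ A) hEq

theorem matchingLE.exists_not_disjoint {V : Type*} [DecidableEq V]
    {H M : Finset (Finset V)} {k : ℕ}
    (hmatch : matchingLE H k) (hMH : M ⊆ H) (hMdisj : (M : Set (Finset V)).Pairwise Disjoint)
    (hMcard : M.card = k) {E : Finset V} (hEH : E ∈ H) (hEM : E ∉ M) :
    ∃ e ∈ M, ¬ Disjoint e E := by
  by_contra! hdisj
  have hins : (insert E M).card ≤ k :=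
    hmatch _ (insert_subset hEH hMH) <| by
      rw [coe_insert]
      exact hMdisj.insert fun e he _ => ⟨(hdisj e he).symm, hdisj e he⟩
  rw [card_insert_of_notMem hEM, hMcard] at hins
  omega

theorem card_filter_mem_le_sum_degOf_pair {V : Type*} [DecidableEq V]
    (H : Finset (Finset V)) (u : V) (W : Finset V)
    (hcover : ∀ E ∈ H, u ∈ E → ∃ v ∈ W, v ∈ E) :
    (H.filter (fun E => u ∈ E)).card ≤ ∑ v ∈ W, degOf H {u, v} := by
  refine (card_le_card fun E hE => ?_).trans card_biUnion_le
  obtain ⟨hEH, huE⟩ := mem_filter.mp hE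
  obtain ⟨v, hvW, hvE⟩ := hcover E hEH huE
  exact mem_biUnion.mpr
    ⟨v, hvW, mem_filter.mpr ⟨hEH, insert_subset huE (singleton_subset_iff.mpr hvE)⟩⟩

theorem degree_bound_of_matching_avoiding_general {V : Type*} [Fintype V] [DecidableEq V] {n k r : ℕ}
    (hcard : Fintype.card V = n)
    (H : Finset (Finset V)) (hunif : ∀ E ∈ H, E.card = r)
    (hmatch : matchingLE H k)
    (u : V)
    (hM : ∃ M ⊆ H, (M : Set (Finset V)).Pairwise Disjoint ∧ M.card = k ∧ ∀ E ∈ M, u ∉ E) :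
    (H.filter (fun E => u ∈ E)).card ≤ r * k * Nat.choose (n - 2) (r - 2) := by
  obtain ⟨M, hMH, hMdisj, hMcard, hMu⟩ := hM
  set W := M.biUnion id
  have hWcard : W.card ≤ k * r :=
    hMcard ▸ card_biUnion_le_card_mul M id r fun e he => (hunif e (hMH he)).le
  have hcover : ∀ E ∈ H, u ∈ E → ∃ v ∈ W, v ∈ E := fun E hEH huE => by
    obtain ⟨e, he, hne⟩ :=
      hmatch.exists_not_disjoint hMH hMdisj hMcard hEH fun hEM => hMu E hEM huE
    obtain ⟨v, hve, hvE⟩ := not_disjoint_iff.mp hne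
    exact ⟨v, mem_biUnion.mpr ⟨e, he, hve⟩, hvE⟩
  have hcodeg : ∀ v ∈ W, degOf H {u, v} ≤ Nat.choose (n - 2) (r - 2) := fun v hvW => by
    obtain ⟨e, he, hve⟩ := mem_biUnion.mp hvW
    have hpair : ({u, v} : Finset V).card = 2 :=
      card_pair fun huv => hMu e he (huv ▸ hve)
    simpa [hpair, hcard] using degOf_le_choose H hunif {u, v}
  calc (H.filter (fun E => u ∈ E)).card ≤ ∑ v ∈ W, degOf H {u, v} :=
        card_filter_mem_le_sum_degOf_pair H u W hcover
    _ ≤ W.card * Nat.choose (n - 2) (r - 2) := sum_le_card_nsmul W _ _ hcodeg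
    _ ≤ r * k * Nat.choose (n - 2) (r - 2) := by rw [mul_comm r]; gcongr

/-- a vertex whose removal still admits a matching of size `k`
has degree at most `r * k * C(n-2, r-2)`. -/
theorem degree_bound_of_matching_avoiding {V : Type*} [Fintype V] [DecidableEq V] {n k r : ℕ}
    (hr : 2 ≤ r) (hcard : Fintype.card V = n)
    (H : Finset (Finset V)) (hunif : ∀ E ∈ H, E.card = r)
    (hmatch : matchingLE H k)
    (u : V)
    (hM : ∃ M ⊆ H, (M : Set (Finset V)).Pairwise Disjoint ∧ M.card = k ∧ ∀ E ∈ M, u ∉ E) :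
    (H.filter (fun E => u ∈ E)).card ≤ r * k * Nat.choose (n - 2) (r - 2) :=
  degree_bound_of_matching_avoiding_general hcard H hunif hmatch u hM
end

section
/- Let H be a stable r-graph on the vertex set [n], let a be an integer with 1 ≤ a < r, let A be an a-element subset of [n], and let i, j be integers with 1 ≤ i < j ≤ n, j ∈ A and i ∉ A. Then deg_H((A∖{j})∪{i}) ≥ deg_H(A). -/
/-!
The map `E ↦ E` if `i ∈ E`, else `E ↦ (E ∖ {j}) ∪ {i}`, is injective on sets containing `j`,
sends every superset of `A` to a superset of `(A ∖ {j}) ∪ {i}`, and by stability sends edges to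
edges; so it injects the edges through `A` into the edges through `(A ∖ {j}) ∪ {i}`.
-/

open Finset

theorem IsStable.insert_erase_mem {n : ℕ} {H : Finset (Finset (Fin n))} (hH : IsStable H)
    {i j : Fin n} (hij : i < j) {E : Finset (Fin n)} (hE : E ∈ H) (hjE : j ∈ E) (hiE : i ∉ E) :
    insert i (E.erase j) ∈ H := by
  by_contra hnot
  have hshift : shiftEdge H i j E = insert i (E.erase j) := by
    simp [shiftEdge, hjE, hiE, hnot]
  have hmem : shiftEdge H i j E ∈ shift H i j := mem_image_of_mem _ hE
  rw [hH i j hij, hshift] at hmem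
  exact hnot hmem

section ShiftSet

variable {α : Type*} [DecidableEq α]

def shiftSet (i j : α) (E : Finset α) : Finset α :=
  if i ∈ E then E else insert i (E.erase j)

theorem insert_erase_subset_shiftSet {i j : α} {A E : Finset α} (hAE : A ⊆ E) :
    insert i (A.erase j) ⊆ shiftSet i j E := by
  unfold shiftSet
  split_ifs with hiE
  · exact insert_subset hiE ((erase_subset j A).trans hAE)
  · exact insert_subset_insert i (erase_subset_erase j hAE)

theorem shiftSet_injOn {i j : α} (hij : i ≠ j) :
    Set.InjOn (shiftSet i j) {E | j ∈ E} := by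
  intro E₁ hj₁ E₂ hj₂ heq
  have hj_not_mem : ∀ E : Finset α, j ∉ insert i (E.erase j) := by
    simp [hij.symm]
  unfold shiftSet at heq
  split_ifs at heq with hi₁ hi₂ hi₂
  · exact heq
  · exact absurd (heq ▸ hj₁) (hj_not_mem E₂)
  · exact absurd (heq ▸ hj₂) (hj_not_mem E₁)
  · have hi₁' : i ∉ E₁.erase j := fun h => hi₁ (mem_of_mem_erase h)
    have hi₂' : i ∉ E₂.erase j := fun h => hi₂ (mem_of_mem_erase h)
    have herase : E₁.erase j = E₂.erase j := by
      rw [← erase_insert hi₁', heq, erase_insert hi₂']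
    exact erase_injOn' j hj₁ hj₂ herase

end ShiftSet

theorem IsStable.shiftSet_mem {n : ℕ} {H : Finset (Finset (Fin n))} (hH : IsStable H)
    {i j : Fin n} (hij : i < j) {E : Finset (Fin n)} (hE : E ∈ H) (hjE : j ∈ E) :
    shiftSet i j E ∈ H := by
  unfold shiftSet
  split_ifs with hiE
  · exact hE
  · exact hH.insert_erase_mem hij hE hjE hiE

theorem degOf_shift_ge_of_stable_general {n : ℕ}
    (H : Finset (Finset (Fin n)))
    (hstable : IsStable H)
    (A : Finset (Fin n))
    (i j : Fin n) (hij : i < j) (hjA : j ∈ A) :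
    degOf H A ≤ degOf H (insert i (A.erase j)) := by
  refine card_le_card_of_injOn (shiftSet i j) (fun E hE => ?_)
    ((shiftSet_injOn hij.ne).mono fun E hE => (mem_filter.mp hE).2 hjA)
  obtain ⟨hEH, hAE⟩ := mem_filter.mp hE
  exact mem_filter.mpr ⟨hstable.shiftSet_mem hij hEH (hAE hjA), insert_erase_subset_shiftSet hAE⟩

/-- in a stable `r`-graph, shifting an `a`-set does not decrease its degree
(Claim 1 in the proof of Theorem 1.3 (II)). -/
theorem degOf_shift_ge_of_stable {n r a : ℕ}
    (ha : 1 ≤ a) (har : a < r)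
    (H : Finset (Finset (Fin n))) (hunif : ∀ E ∈ H, E.card = r)
    (hstable : IsStable H)
    (A : Finset (Fin n)) (hA : A.card = a)
    (i j : Fin n) (hij : i < j) (hjA : j ∈ A) (hiA : i ∉ A) :
    degOf H A ≤ degOf H (insert i (A.erase j)) :=
  degOf_shift_ge_of_stable_general H hstable A i j hij hjA
end
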